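/- Let Z : Fin N → ℝ^k, Π a partition of Fin N into nonempty classes, μ_π the mean of Z over class π, and M_intra = ∑_{π∈Π} ∑_{i∈π} ‖z_i − μ_π‖². Then for any two distinct classes π, π' ∈ Π, M_intra ≥ (1/4) |ξ_{π→π'}| ‖μ_π − μ_{π'}‖², where ξ_{π→π'} = { i ∈ π : ‖z_i − μ_π‖ ≥ ‖z_i − μ_{π'}‖ }. -/

import Mathlib

open Finset

/-!
A point `z` at least as close to `m'` as to `m` satisfies
`‖m - m'‖ ≤ ‖z - m‖ + ‖z - m'‖ ≤ 2 ‖z - m‖`, so each point of `ξ_{π→π'}` contributes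
at least `‖μ_π - μ_π'‖² / 4` to the distortion of its own class, hence to `M_intra`.
-/

section Seminormed

variable {E : Type*} [SeminormedAddCommGroup E]

theorem norm_sub_le_two_mul_of_norm_sub_le {z m m' : E} (h : ‖z - m'‖ ≤ ‖z - m‖) :
    ‖m - m'‖ ≤ 2 * ‖z - m‖ :=
  calc ‖m - m'‖ ≤ ‖m - z‖ + ‖z - m'‖ := norm_sub_le_norm_sub_add_norm_sub m z m'
    _ = ‖z - m‖ + ‖z - m'‖ := by rw [norm_sub_rev m z]
    _ ≤ 2 * ‖z - m‖ := by linarith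

theorem quarter_mul_sq_norm_sub_le_of_norm_sub_le {z m m' : E} (h : ‖z - m'‖ ≤ ‖z - m‖) :
    1 / 4 * ‖m - m'‖ ^ 2 ≤ ‖z - m‖ ^ 2 := by
  have hle := norm_sub_le_two_mul_of_norm_sub_le h
  nlinarith [norm_nonneg (m - m')]

theorem quarter_mul_card_closer_mul_sq_le_sum_sq_norm_sub {ι : Type*} (s : Finset ι)
    (z : ι → E) (m m' : E) :
    1 / 4 * (#{i ∈ s | ‖z i - m'‖ ≤ ‖z i - m‖} : ℝ) * ‖m - m'‖ ^ 2 ≤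
      ∑ i ∈ s, ‖z i - m‖ ^ 2 :=
  calc 1 / 4 * (#{i ∈ s | ‖z i - m'‖ ≤ ‖z i - m‖} : ℝ) * ‖m - m'‖ ^ 2
      = #{i ∈ s | ‖z i - m'‖ ≤ ‖z i - m‖} • (1 / 4 * ‖m - m'‖ ^ 2) := by
        rw [nsmul_eq_mul]; ring
    _ ≤ ∑ i ∈ s with ‖z i - m'‖ ≤ ‖z i - m‖, ‖z i - m‖ ^ 2 :=
        card_nsmul_le_sum _ _ _ fun i hi ↦
          quarter_mul_sq_norm_sub_le_of_norm_sub_le (mem_filter.mp hi).2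
    _ ≤ ∑ i ∈ s, ‖z i - m‖ ^ 2 :=
        sum_le_sum_of_subset_of_nonneg (filter_subset _ _) fun _ _ _ ↦ by positivity

end Seminormed

theorem kmeans_intra_lower_bound_general
    (N k C : ℕ) (Z : Fin N → EuclideanSpace ℝ (Fin k))
    (c : Fin N → Fin C)
    (μ : Fin C → EuclideanSpace ℝ (Fin k))
    (Mintra : ℝ)
    (hM : Mintra = ∑ a : Fin C, ∑ i ∈ Finset.univ.filter (fun i => c i = a),
        ‖Z i - μ a‖ ^ 2)
    (a b : Fin C) :
    (1 / 4 : ℝ) *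
        (((Finset.univ.filter (fun i => c i = a)).filter
            (fun i => ‖Z i - μ b‖ ≤ ‖Z i - μ a‖)).card : ℝ) *
        ‖μ a - μ b‖ ^ 2 ≤ Mintra := by
  subst hM
  calc _ ≤ ∑ i ∈ univ.filter (fun i => c i = a), ‖Z i - μ a‖ ^ 2 :=
        quarter_mul_card_closer_mul_sq_le_sum_sq_norm_sub _ Z (μ a) (μ b)
    _ ≤ _ :=
        single_le_sum (f := fun a' ↦ ∑ i ∈ univ.filter (fun i => c i = a'), ‖Z i - μ a'‖ ^ 2)
          (fun _ _ ↦ sum_nonneg fun _ _ ↦ by positivity) (mem_univ a)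

/-- the intra-class K-means distortion dominates
`(1/4) |ξ_{π→π'}| ‖μ_π − μ_{π'}‖²` for any two distinct classes. -/
theorem kmeans_intra_lower_bound
    (N k C : ℕ) (Z : Fin N → EuclideanSpace ℝ (Fin k))
    (c : Fin N → Fin C)
    (hne : ∀ a : Fin C, (Finset.univ.filter (fun i => c i = a)).Nonempty)
    (μ : Fin C → EuclideanSpace ℝ (Fin k))
    (hμ : ∀ a, μ a = ((Finset.univ.filter (fun i => c i = a)).card : ℝ)⁻¹ •
        ∑ i ∈ Finset.univ.filter (fun i => c i = a), Z i)
    (Mintra : ℝ)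
    (hM : Mintra = ∑ a : Fin C, ∑ i ∈ Finset.univ.filter (fun i => c i = a),
        ‖Z i - μ a‖ ^ 2)
    (a b : Fin C) (hab : a ≠ b) :
    (1 / 4 : ℝ) *
        (((Finset.univ.filter (fun i => c i = a)).filter
            (fun i => ‖Z i - μ b‖ ≤ ‖Z i - μ a‖)).card : ℝ) *
        ‖μ a - μ b‖ ^ 2 ≤ Mintra :=
  kmeans_intra_lower_bound_general N k C Z c μ Mintra hM a b
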